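/- Fix s, t ∈ ℕ with s ≠ t and z ∈ ℂ with 0 < |z| < 1. For a Borel set X ⊆ [0,2π) with Lebesgue measure ℓ(X), let c(X) = (1/(2π)) ∫_X e^{i(s−t)x} dx and let E_el(X) be the bounded operator on ℓ²(ℕ) given by E_el(X) = (ℓ(X)/(2π))·I + z·c(X)·|e_s⟩⟨e_t| + \overline{z·c(X)}·|e_t⟩⟨e_s|, where (eₙ) is the standard orthonormal basis (this is the effect of an elementary phase observable). Then ‖E_el(X)‖ = ℓ(X)/(2π) + |z|·|c(X)|, and if ℓ([0,2π) ∖ X) > 0 then ‖E_el(X)‖ < 1. Hence an elementary phase observable does not have the norm-1-property. -/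

import Mathlib

set_option maxHeartbeats 1000000
open MeasureTheory ContinuousLinearMap Real
open scoped InnerProductSpace

noncomputable def ee (n : ℕ) : lp (fun _ : ℕ => ℂ) 2 := lp.single 2 n 1

lemma inner_ee (n : ℕ) (ψ : lp (fun _ : ℕ => ℂ) 2) : ⟪ee n, ψ⟫_ℂ = ψ n := by
  rw [ee, lp.inner_single_left]
  simp [RCLike.inner_apply]

lemma ee_apply (n m : ℕ) : (ee n : ∀ _ : ℕ, ℂ) m = if m = n then 1 else 0 := by
  rw [ee, lp.single_apply]
  split_ifs with h
  · subst h; simp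
  · simp [h]

lemma norm_ee (n : ℕ) : ‖ee n‖ = 1 := by
  have := lp.norm_single (E := fun _ : ℕ => ℂ) (p := 2) (by norm_num) n (1:ℂ)
  simpa [ee] using this

lemma inner_ee_ee (n m : ℕ) (h : n ≠ m) : ⟪ee n, ee m⟫_ℂ = 0 := by
  rw [inner_ee, ee_apply, if_neg h]

lemma opnorm_eq (s t : ℕ) (hst : s ≠ t) (a : ℝ) (ha : 0 ≤ a) (w : ℂ)
    (Eel : lp (fun _ : ℕ => ℂ) 2 →L[ℂ] lp (fun _ : ℕ => ℂ) 2)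
    (hE : Eel = ((a : ℝ) : ℂ) • 1 + w • ((innerSL ℂ (ee t)).smulRight (ee s))
      + (starRingEnd ℂ) w • ((innerSL ℂ (ee s)).smulRight (ee t))) :
    ‖Eel‖ = a + ‖w‖ := by
  have horth : Orthonormal ℂ ee := by
    rw [orthonormal_iff_ite]
    intro i j
    rw [inner_ee, ee_apply]
  have happ : ∀ ψ : lp (fun _ : ℕ => ℂ) 2, Eel ψ =
      (a : ℂ) • ψ + (w * ψ t) • ee s + ((starRingEnd ℂ) w * ψ s) • ee t := by
    intro ψ
    rw [hE]
    simp [ContinuousLinearMap.smulRight_apply, innerSL_apply_apply, inner_ee, smul_smul]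
    rfl
  have hT : ∀ ψ : lp (fun _ : ℕ => ℂ) 2,
      ‖(w * ψ t) • ee s + ((starRingEnd ℂ) w * ψ s) • ee t‖ ≤ ‖w‖ * ‖ψ‖ := by
    intro ψ
    set u := (w * ψ t) • ee s with hu
    set v := ((starRingEnd ℂ) w * ψ s) • ee t with hv
    have h0 : ⟪u, v⟫_ℂ = 0 := by
      rw [hu, hv, inner_smul_left, inner_smul_right, inner_ee_ee s t hst]
      ring
    have h1 : ‖u + v‖ ^ 2 = ‖u‖ ^ 2 + ‖v‖ ^ 2 := by
      rw [@norm_add_sq ℂ _ _ _ _ u v, h0]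
      simp
    have hnu : ‖u‖ = ‖w‖ * ‖ψ t‖ := by
      rw [hu, norm_smul, norm_ee]
      simp
    have hnv : ‖v‖ = ‖w‖ * ‖ψ s‖ := by
      rw [hv, norm_smul, norm_ee]
      simp
    have hB : ‖ψ s‖ ^ 2 + ‖ψ t‖ ^ 2 ≤ ‖ψ‖ ^ 2 := by
      have := horth.sum_inner_products_le (s := ({s, t} : Finset ℕ)) ψ
      simpa [Finset.sum_pair hst, inner_ee] using this
    have h2 : ‖u + v‖ ^ 2 ≤ (‖w‖ * ‖ψ‖) ^ 2 := by
      rw [h1, hnu, hnv]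
      have hw2 : (0:ℝ) ≤ ‖w‖ ^ 2 := by positivity
      nlinarith [hw2, hB]
    exact (pow_le_pow_iff_left₀ (norm_nonneg _) (mul_nonneg (norm_nonneg w) (norm_nonneg ψ)) two_ne_zero).mp h2
  have hub : ‖Eel‖ ≤ a + ‖w‖ := by
    refine opNorm_le_bound _ (add_nonneg ha (norm_nonneg w)) fun ψ => ?_
    rw [happ ψ, add_assoc]
    calc ‖(a:ℂ) • ψ + ((w * ψ t) • ee s + ((starRingEnd ℂ) w * ψ s) • ee t)‖
        ≤ ‖(a:ℂ) • ψ‖ + ‖(w * ψ t) • ee s + ((starRingEnd ℂ) w * ψ s) • ee t‖ :=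
          norm_add_le _ _
      _ ≤ a * ‖ψ‖ + ‖w‖ * ‖ψ‖ := by
          refine add_le_add ?_ (hT ψ)
          rw [norm_smul]
          simp [abs_of_nonneg ha]
      _ = (a + ‖w‖) * ‖ψ‖ := by ring
  -- lower bound via eigenvector
  set r : ℝ := ‖w‖ with hr
  have hrw : (0:ℝ) ≤ r := norm_nonneg w
  set β : ℂ := if w = 0 then 0 else (starRingEnd ℂ) w / (r : ℂ) with hβ
  have hwβ : w * β = (r : ℂ) := by
    by_cases h : w = 0
    · simp [hβ, h, hr]
    · rw [hβ, if_neg h]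
      have hr0 : (r : ℂ) ≠ 0 := by
        simpa [hr] using norm_ne_zero_iff.mpr h
      field_simp
      rw [Complex.mul_conj, Complex.normSq_eq_norm_sq]
      push_cast [hr]
      ring
  have hcwβ : (starRingEnd ℂ) w = (r : ℂ) * β := by
    by_cases h : w = 0
    · simp [hβ, h]
    · rw [hβ, if_neg h]
      have hr0 : (r : ℂ) ≠ 0 := by
        simpa [hr] using norm_ne_zero_iff.mpr h
      field_simp
  set ψ : lp (fun _ : ℕ => ℂ) 2 := ee s + β • ee t with hψ
  have hψs : (ψ : ∀ _ : ℕ, ℂ) s = 1 := by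
    show (ee s : ∀ _ : ℕ, ℂ) s + β * (ee t : ∀ _ : ℕ, ℂ) s = 1
    simp [hψ, lp.coeFn_add, lp.coeFn_smul, Pi.add_apply, Pi.smul_apply, ee_apply, hst]
  have hψt : (ψ : ∀ _ : ℕ, ℂ) t = β := by
    show (ee s : ∀ _ : ℕ, ℂ) t + β * (ee t : ∀ _ : ℕ, ℂ) t = β
    simp [hψ, lp.coeFn_add, lp.coeFn_smul, Pi.add_apply, Pi.smul_apply, ee_apply, hst, Ne.symm hst]
  have heig : Eel ψ = ((a + r : ℝ) : ℂ) • ψ := by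
    rw [happ ψ, hψs, hψt, hwβ, hcwβ]
    rw [hψ]
    push_cast
    module
  have hψne : ψ ≠ 0 := by
    intro h
    rw [h] at hψs
    simp at hψs
  have hψpos : 0 < ‖ψ‖ := norm_pos_iff.mpr hψne
  have hlb : a + r ≤ ‖Eel‖ := by
    have h1 : ‖Eel ψ‖ ≤ ‖Eel‖ * ‖ψ‖ := Eel.le_opNorm ψ
    rw [heig, norm_smul] at h1
    have : ‖((a + r : ℝ) : ℂ)‖ = a + r := by
      rw [Complex.norm_real, Real.norm_eq_abs]
      exact abs_of_nonneg (add_nonneg ha hrw)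
    rw [this] at h1
    exact le_of_mul_le_mul_right h1 hψpos
  exact le_antisymm hub hlb

lemma abs_int_le (s t : ℕ) (hst : s ≠ t) (X : Set ℝ) (hX : MeasurableSet X)
    (hXsub : X ⊆ Set.Ico 0 (2 * π)) :
    ‖∫ x in X, Complex.exp (Complex.I * (((s : ℂ) - (t : ℂ)) * (x : ℂ)))‖
      ≤ (volume (Set.Ico 0 (2 * π) \ X)).toReal := by
  set k : ℂ := (s : ℂ) - (t : ℂ) with hk
  have hk0 : k ≠ 0 := sub_ne_zero.mpr (by exact_mod_cast hst)
  set f : ℝ → ℂ := fun x => Complex.exp (Complex.I * (k * x)) with hf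
  have hcont : Continuous f := by
    apply Complex.continuous_exp.comp
    exact continuous_const.mul (continuous_const.mul Complex.continuous_ofReal)
  have h2π : (0:ℝ) ≤ 2 * π := by positivity
  have hInt : IntegrableOn f (Set.Ico 0 (2 * π)) volume := by
    rw [← intervalIntegrable_iff_integrableOn_Ico_of_le h2π]
    exact hcont.intervalIntegrable 0 (2 * π)
  have hIntX : IntegrableOn f X volume := hInt.mono_set hXsub
  have hIntD : IntegrableOn f (Set.Ico 0 (2 * π) \ X) volume :=
    hInt.mono_set Set.diff_subset
  have I0 : ∫ x in Set.Ico 0 (2 * π), f x = 0 := by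
    rw [integral_Ico_eq_integral_Ioo, ← integral_Ioc_eq_integral_Ioo,
      ← intervalIntegral.integral_of_le h2π]
    have harg : ∀ x : ℝ, Complex.I * (k * x) = (Complex.I * k) * x := fun x => by ring
    simp_rw [hf, harg]
    rw [integral_exp_mul_complex (mul_ne_zero Complex.I_ne_zero hk0)]
    have h1 : Complex.exp (Complex.I * k * ((2 * π : ℝ) : ℂ)) = 1 := by
      have := Complex.exp_int_mul_two_pi_mul_I ((s : ℤ) - (t : ℤ))
      rw [← this]
      congr 1
      push_cast [hk]
      ring
    rw [h1]
    simp
  have hsplit : (∫ x in X, f x) + ∫ x in Set.Ico 0 (2 * π) \ X, f x = 0 := by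
    rw [← setIntegral_union disjoint_sdiff_self_right (measurableSet_Ico.diff hX) hIntX hIntD,
      Set.union_diff_cancel hXsub, I0]
  have hXeq : (∫ x in X, f x) = -∫ x in Set.Ico 0 (2 * π) \ X, f x :=
    eq_neg_of_add_eq_zero_left hsplit
  have hfin : volume (Set.Ico 0 (2 * π) \ X) < ⊤ :=
    lt_of_le_of_lt (measure_mono Set.diff_subset)
      (by rw [Real.volume_Ico]; exact ENNReal.ofReal_lt_top)
  have hbound : ‖∫ x in Set.Ico 0 (2 * π) \ X, f x‖
      ≤ 1 * (volume (Set.Ico 0 (2 * π) \ X)).toReal := by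
    refine norm_setIntegral_le_of_norm_le_const hfin fun x _ => ?_
    rw [hf]
    rw [Complex.norm_exp]
    simp [hk, Complex.mul_re, Complex.mul_im]
  rw [hXeq, norm_neg]
  linarith

/-- the norm of an effect of an elementary phase observable is
`ℓ(X)/(2π) + |z||c(X)|`, and it is strictly less than one whenever the
complement of `X` has positive measure; hence an elementary phase observable
does not have the norm-1-property. -/
theorem elementary_phase_effect_norm_lt_one
    (s t : ℕ) (hst : s ≠ t) (z : ℂ)
    (hz0 : 0 < ‖z‖) (hz1 : ‖z‖ < 1)
    (X : Set ℝ) (hX : MeasurableSet X) (hXsub : X ⊆ Set.Ico 0 (2 * π))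
    (c : ℂ)
    (hc : c = (1 / (2 * π) : ℂ) *
      ∫ x in X, Complex.exp (Complex.I * (((s : ℂ) - (t : ℂ)) * (x : ℂ))))
    (Eel : lp (fun _ : ℕ => ℂ) 2 →L[ℂ] lp (fun _ : ℕ => ℂ) 2)
    (hE : Eel = (((volume X).toReal / (2 * π) : ℝ) : ℂ) • 1
      + (z * c) • ((innerSL ℂ (lp.single 2 t (1 : ℂ))).smulRight (lp.single 2 s (1 : ℂ)))
      + (starRingEnd ℂ) (z * c) •
          ((innerSL ℂ (lp.single 2 s (1 : ℂ))).smulRight (lp.single 2 t (1 : ℂ)))) :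
    ‖Eel‖ = (volume X).toReal / (2 * π) + ‖z‖ * ‖c‖ ∧
    (0 < volume (Set.Ico 0 (2 * π) \ X) → ‖Eel‖ < 1) := by
  have hπ : (0:ℝ) < 2 * π := by positivity
  have ha : (0:ℝ) ≤ (volume X).toReal / (2 * π) := by positivity
  have hnorm : ‖Eel‖ = (volume X).toReal / (2 * π) + ‖z * c‖ := by
    refine opnorm_eq s t hst _ ha (z * c) Eel ?_
    rw [hE]; rfl
  have hnorm' : ‖Eel‖ = (volume X).toReal / (2 * π) + ‖z‖ * ‖c‖ := by
    rw [hnorm, norm_mul]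
  refine ⟨hnorm', fun h => ?_⟩
  -- measure arithmetic
  have hIcovol : volume (Set.Ico 0 (2 * π)) = ENNReal.ofReal (2 * π) := by
    rw [Real.volume_Ico, sub_zero]
  have hfinD : volume (Set.Ico 0 (2 * π) \ X) < ⊤ :=
    lt_of_le_of_lt (measure_mono Set.diff_subset) (by rw [hIcovol]; exact ENNReal.ofReal_lt_top)
  have hfinX : volume X < ⊤ :=
    lt_of_le_of_lt (measure_mono hXsub) (by rw [hIcovol]; exact ENNReal.ofReal_lt_top)
  set m : ℝ := (volume (Set.Ico 0 (2 * π) \ X)).toReal with hm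
  have hm0 : 0 < m := ENNReal.toReal_pos h.ne' hfinD.ne
  have hsum : (volume X).toReal + m = 2 * π := by
    have hu : volume X + volume (Set.Ico 0 (2 * π) \ X) = ENNReal.ofReal (2 * π) := by
      rw [← measure_union disjoint_sdiff_self_right (measurableSet_Ico.diff hX),
        Set.union_diff_cancel hXsub, hIcovol]
    have := congrArg ENNReal.toReal hu
    rw [ENNReal.toReal_add hfinX.ne hfinD.ne, ENNReal.toReal_ofReal hπ.le] at this
    exact this
  have hcle : ‖c‖ ≤ m / (2 * π) := by
    have habs : ‖(1 / (2 * π) : ℂ)‖ = 1 / (2 * π) := by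
      rw [norm_div, norm_one]
      have : ((2 * π : ℝ) : ℂ) = (2 * (π : ℂ)) := by push_cast; ring
      rw [← this, Complex.norm_real, Real.norm_eq_abs, abs_of_pos hπ]
    rw [hc, norm_mul, habs]
    have := abs_int_le s t hst X hX hXsub
    rw [← hm] at this
    rw [div_mul_eq_mul_div, one_mul, div_le_div_iff₀ hπ hπ]
    nlinarith [norm_nonneg (∫ x in X, Complex.exp (Complex.I * (((s : ℂ) - (t : ℂ)) * (x : ℂ))))]
  rw [hnorm']
  have hz : ‖z‖ * ‖c‖ < m / (2 * π) := by
    have h1 : ‖z‖ * ‖c‖ ≤ ‖z‖ * (m / (2 * π)) :=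
      mul_le_mul_of_nonneg_left hcle hz0.le
    have h2 : ‖z‖ * (m / (2 * π)) < 1 * (m / (2 * π)) :=
      mul_lt_mul_of_pos_right hz1 (div_pos hm0 hπ)
    linarith
  have hfield : ((2 * π) - m) / (2 * π) + m / (2 * π) = 1 := by
    field_simp
    ring
  have haeq : (volume X).toReal / (2 * π) = ((2 * π) - m) / (2 * π) := by
    rw [← hsum]; ring_nf
  linarith [hz, hfield, haeq.le, haeq.ge]
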